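/- arXiv:1811.05682 — 3 statements merged into one kernel-verified Lean document; each statement's English description precedes it below -/
import Mathlib

section
/- In the algebra with generators φ, y₁, y₂ and relations φy₁ = y₁φ, φy₂ = y₂φ + h'y₂², y₁y₂ = y₂y₁, φ² = h'y₂φ (h' even central, real: h̄' = h'), the conjugate-linear anti-multiplicative map determined by φ⋆ = φ - h'y₂, y₁⋆ = -y₁, y₂⋆ = -y₂ preserves the defining ideal and squares to the identity, making O(A_{h'}^{2|1}) a ⋆-algebra. -/
/-!
Realise `⋆` as a ring homomorphism from the free algebra into its opposite that is
`conj`-semilinear on scalars; additivity, conjugate-linearity and anti-multiplicativity are then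
automatic. The composite `⋆ ∘ ⋆` is multiplicative and, since `conj h' = h'`, fixes the scalars and
the generators, so it is the identity. For the ideal it suffices that `⋆` sends each of the four
relators into it, and in fact `⋆` maps each relator to `±` itself, except
`φy₁ - y₁φ ↦ (φy₁ - y₁φ) + h'(y₁y₂ - y₂y₁)`.
-/

open FreeAlgebra MulOpposite

namespace FreeAlgebra

variable {R X B : Type*} [CommSemiring R] [Semiring B] [Algebra R B]

noncomputable def liftSemilinear (σ : R →+* R) (f : X → B) : FreeAlgebra R X →+* B :=
  (MonoidAlgebra.liftNCRingHom ((algebraMap R B).comp σ) (FreeMonoid.lift f)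
    fun _ _ => Algebra.commute_algebraMap_left _ _).comp
    (equivMonoidAlgebraFreeMonoid (R := R) (X := X) : FreeAlgebra R X →+* _)

variable (σ : R →+* R) (f : X → B)

@[simp]
lemma liftSemilinear_ι (x : X) : liftSemilinear σ f (ι R x) = f x := by
  simp [liftSemilinear, equivMonoidAlgebraFreeMonoid, MonoidAlgebra.of_apply]

@[simp]
lemma liftSemilinear_algebraMap (r : R) :
    liftSemilinear σ f (algebraMap R _ r) = algebraMap R B (σ r) := by
  simp [liftSemilinear, MonoidAlgebra.coe_algebraMap]

lemma liftSemilinear_smul (r : R) (a : FreeAlgebra R X) :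
    liftSemilinear σ f (r • a) = σ r • liftSemilinear σ f a := by
  rw [Algebra.smul_def, map_mul, liftSemilinear_algebraMap, Algebra.smul_def]

lemma involutive_unop_of_algebraMap_of_ι (S : FreeAlgebra R X →+* (FreeAlgebra R X)ᵐᵒᵖ)
    (h_algebraMap : ∀ r : R, unop (S (unop (S (algebraMap R _ r)))) = algebraMap R _ r)
    (h_ι : ∀ x : X, unop (S (unop (S (ι R x)))) = ι R x) :
    Function.Involutive fun a => unop (S a) := by
  intro a
  induction a using FreeAlgebra.induction with
  | grade0 r => exact h_algebraMap r
  | grade1 x => exact h_ι x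
  | mul a b ha hb => simp only [map_mul, unop_mul, ha, hb]
  | add a b ha hb => simp only [map_add, unop_add, ha, hb]

end FreeAlgebra

lemma TwoSidedIdeal.unop_mem_of_mem_span {A B : Type*} [Ring A] [Ring B] (S : A →+* Bᵐᵒᵖ)
    {s : Set A} {J : TwoSidedIdeal B} (hs : ∀ a ∈ s, MulOpposite.unop (S a) ∈ J) {a : A}
    (ha : a ∈ span s) : MulOpposite.unop (S a) ∈ J :=
  have : span s ≤ J.op.comap S := span_le.2 fun a h => (mem_comap S).2 (mem_op_iff.2 (hs a h))
  mem_op_iff.1 ((mem_comap S).1 (this ha))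

namespace Ahp21

variable (h' : ℝ)

abbrev φ : FreeAlgebra ℂ (Fin 3) := ι ℂ 0
abbrev y₁ : FreeAlgebra ℂ (Fin 3) := ι ℂ 1
abbrev y₂ : FreeAlgebra ℂ (Fin 3) := ι ℂ 2

abbrev rel₁ : FreeAlgebra ℂ (Fin 3) := φ * y₁ - y₁ * φ
abbrev rel₂ : FreeAlgebra ℂ (Fin 3) := φ * y₂ - y₂ * φ - (h' : ℂ) • (y₂ * y₂)
abbrev rel₃ : FreeAlgebra ℂ (Fin 3) := y₁ * y₂ - y₂ * y₁
abbrev rel₄ : FreeAlgebra ℂ (Fin 3) := φ * φ - (h' : ℂ) • (y₂ * φ)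

abbrev ideal : TwoSidedIdeal (FreeAlgebra ℂ (Fin 3)) :=
  TwoSidedIdeal.span {rel₁, rel₂ h', rel₃, rel₄ h'}

noncomputable def starOp : FreeAlgebra ℂ (Fin 3) →+* (FreeAlgebra ℂ (Fin 3))ᵐᵒᵖ :=
  liftSemilinear (starRingEnd ℂ) fun i => op (![φ - (h' : ℂ) • y₂, -y₁, -y₂] i)

noncomputable def starMap (a : FreeAlgebra ℂ (Fin 3)) : FreeAlgebra ℂ (Fin 3) :=
  unop (starOp h' a)

section Algebraic

variable (a b : FreeAlgebra ℂ (Fin 3))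

lemma starMap_add : starMap h' (a + b) = starMap h' a + starMap h' b := by simp [starMap]
lemma starMap_neg : starMap h' (-a) = -starMap h' a := by simp [starMap]
lemma starMap_sub : starMap h' (a - b) = starMap h' a - starMap h' b := by simp [starMap]
lemma starMap_mul : starMap h' (a * b) = starMap h' b * starMap h' a := by simp [starMap]

lemma starMap_smul (c : ℂ) : starMap h' (c • a) = starRingEnd ℂ c • starMap h' a := by
  simp [starMap, starOp, liftSemilinear_smul]

end Algebraic

lemma starMap_φ : starMap h' φ = φ - (h' : ℂ) • y₂ := by simp [starMap, starOp]
lemma starMap_y₁ : starMap h' y₁ = -y₁ := by simp [starMap, starOp]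
lemma starMap_y₂ : starMap h' y₂ = -y₂ := by simp [starMap, starOp]

lemma starMap_involutive : Function.Involutive (starMap h') := by
  refine involutive_unop_of_algebraMap_of_ι _ (fun r => ?_) fun x => ?_
  · simp [starOp]
  · fin_cases x
    · change starMap h' (starMap h' φ) = φ
      rw [starMap_φ, starMap_sub, starMap_smul, starMap_φ, starMap_y₂, Complex.conj_ofReal,
        smul_neg, sub_neg_eq_add, sub_add_cancel]
    · change starMap h' (starMap h' y₁) = y₁
      rw [starMap_y₁, starMap_neg, starMap_y₁, neg_neg]
    · change starMap h' (starMap h' y₂) = y₂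
      rw [starMap_y₂, starMap_neg, starMap_y₂, neg_neg]

lemma starMap_rel₁ : starMap h' rel₁ = rel₁ + (h' : ℂ) • rel₃ := by
  rw [starMap_sub, starMap_mul, starMap_mul, starMap_φ, starMap_y₁]
  simp only [mul_sub, sub_mul, neg_mul, mul_neg, smul_mul_assoc, mul_smul_comm, smul_sub]
  module

lemma starMap_rel₂ : starMap h' (rel₂ h') = rel₂ h' := by
  rw [starMap_sub, starMap_sub, starMap_mul, starMap_mul, starMap_smul, starMap_mul, starMap_φ,
    starMap_y₂, Complex.conj_ofReal]
  simp only [mul_sub, sub_mul, neg_mul, mul_neg, smul_mul_assoc, mul_smul_comm, smul_neg]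
  module

lemma starMap_rel₃ : starMap h' rel₃ = -rel₃ := by
  rw [starMap_sub, starMap_mul, starMap_mul, starMap_y₁, starMap_y₂]
  noncomm_ring

lemma starMap_rel₄ : starMap h' (rel₄ h') = rel₄ h' := by
  rw [starMap_sub, starMap_mul, starMap_smul, starMap_mul, starMap_φ, starMap_y₂,
    Complex.conj_ofReal]
  simp only [mul_sub, sub_mul, mul_neg, smul_mul_assoc, mul_smul_comm, smul_sub, smul_neg,
    smul_smul]
  module

lemma starMap_mem_ideal {a : FreeAlgebra ℂ (Fin 3)} (ha : a ∈ ideal h') :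
    starMap h' a ∈ ideal h' := by
  refine TwoSidedIdeal.unop_mem_of_mem_span _ ?_ ha
  have mem : ∀ {r}, r ∈ ({rel₁, rel₂ h', rel₃, rel₄ h'} : Set _) → r ∈ ideal h' :=
    fun hr => TwoSidedIdeal.subset_span hr
  rintro r (rfl | rfl | rfl | rfl) <;> change starMap h' _ ∈ _
  · rw [starMap_rel₁, Algebra.smul_def]
    exact add_mem (mem (by simp)) ((ideal h').mul_mem_left _ _ (mem (by simp)))
  · rw [starMap_rel₂]; exact mem (by simp)
  · rw [starMap_rel₃]; exact neg_mem (mem (by simp))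
  · rw [starMap_rel₄]; exact mem (by simp)

end Ahp21

/-- For real `h'`, the conjugate-linear anti-multiplicative map determined by
`φ ↦ φ - h'y₂`, `y₁ ↦ -y₁`, `y₂ ↦ -y₂` preserves the defining ideal of
`O(A_{h'}^{2|1})` and squares to the identity, so `O(A_{h'}^{2|1})` is a ⋆-algebra. -/
theorem star_structure_on_Ahp21 (h' : ℝ) :
    let F := FreeAlgebra ℂ (Fin 3)
    let φ : F := FreeAlgebra.ι ℂ 0
    let y₁ : F := FreeAlgebra.ι ℂ 1
    let y₂ : F := FreeAlgebra.ι ℂ 2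
    let J : TwoSidedIdeal F := TwoSidedIdeal.span
      {φ * y₁ - y₁ * φ, φ * y₂ - y₂ * φ - (h' : ℂ) • (y₂ * y₂),
       y₁ * y₂ - y₂ * y₁, φ * φ - (h' : ℂ) • (y₂ * φ)}
    ∃ s : F → F,
      (∀ a b : F, s (a + b) = s a + s b) ∧
      (∀ (c : ℂ) (a : F), s (c • a) = (starRingEnd ℂ) c • s a) ∧
      (∀ a b : F, s (a * b) = s b * s a) ∧
      s φ = φ - (h' : ℂ) • y₂ ∧ s y₁ = -y₁ ∧ s y₂ = -y₂ ∧
      (∀ a ∈ J, s a ∈ J) ∧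
      (∀ a : F, s (s a) = a) :=
  ⟨Ahp21.starMap h', Ahp21.starMap_add h', fun c a => Ahp21.starMap_smul h' a c,
    Ahp21.starMap_mul h', Ahp21.starMap_φ h', Ahp21.starMap_y₁ h', Ahp21.starMap_y₂ h',
    fun _ => Ahp21.starMap_mem_ideal h', Ahp21.starMap_involutive h'⟩
end

section
/- Define in the Lie superalgebra L (generated by even u and odd ξ₁, ξ₂ with [u,ξ_k] = iℏ_k ξ_k and {ξ_j, ξ_k} = 0) the elements X = e^u and Θ_k = e^{ku}ξ_k in any associative algebra representation where these exponentials make sense. Then X, Θ₁, Θ₂ satisfy the quantum superspace relations XΘ₁ = qΘ₁X, XΘ₂ = pΘ₂X, Θ₁Θ₂ = -pq⁻²Θ₂Θ₁, Θ_k² = 0, where q = e^{iℏ₁}, p = e^{iℏ₂}. -/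
open Complex

/-!
Write the relations as `E x = c • x E`. Then `Eⁿ x = cⁿ • x Eⁿ`, so moving `E` past
`Θ = Eᵐ x` costs the factor `c`, and in a product `(Eᵐ x)(Eⁿ y)` the middle `x Eⁿ` can be
swapped at the cost of `cⁿ`: `cⁿ • (Eᵐ x)(Eⁿ y) = Eᵐ⁺ⁿ x y`. Hence `q² Θ₁Θ₂ = E³ ξ₁ξ₂` and
`p Θ₂Θ₁ = E³ ξ₂ξ₁`, which differ by a sign, while a nonzero multiple of `Θₖ²` is `Eᵐ ξₖ² = 0`.
-/

section TwistedCommutation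

variable {R A : Type*} [CommSemiring R] [Semiring A] [Algebra R A] {E x : A} {c : R}

theorem pow_mul_eq_smul_mul_pow (h : E * x = c • (x * E)) (n : ℕ) :
    E ^ n * x = c ^ n • (x * E ^ n) := by
  induction n with
  | zero => simp
  | succ n ih =>
    calc E ^ (n + 1) * x = E ^ n * (E * x) := by rw [pow_succ, mul_assoc]
      _ = c • (E ^ n * x * E) := by rw [h, mul_smul_comm, mul_assoc]
      _ = c ^ (n + 1) • (x * E ^ (n + 1)) := by
        rw [ih, smul_mul_assoc, smul_smul, pow_succ', mul_assoc, ← pow_succ]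

theorem mul_pow_mul_eq_smul (h : E * x = c • (x * E)) (n : ℕ) :
    E * (E ^ n * x) = c • (E ^ n * x * E) := by
  rw [← mul_assoc, ← pow_succ', pow_succ, mul_assoc, h, mul_smul_comm, mul_assoc]

theorem smul_pow_mul_mul_pow_mul (h : E * x = c • (x * E)) (m n : ℕ) (y : A) :
    c ^ n • (E ^ m * x * (E ^ n * y)) = E ^ (m + n) * (x * y) := by
  rw [← mul_assoc, mul_assoc (E ^ m), ← smul_mul_assoc, ← mul_smul_comm,
    ← pow_mul_eq_smul_mul_pow h, pow_add]
  simp only [mul_assoc]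

end TwistedCommutation

/-- If `E = e^u` satisfies `Eξₖ = e^{iℏₖ}ξₖE` (as follows from `[u,ξₖ] = iℏₖξₖ`),
and `ξ₁, ξ₂` anticommute and square to zero, then `X = E`, `Θ₁ = Eξ₁`, `Θ₂ = E²ξ₂`
satisfy the quantum superspace relations `XΘ₁ = qΘ₁X`, `XΘ₂ = pΘ₂X`,
`Θ₁Θ₂ = -pq⁻²Θ₂Θ₁`, `Θₖ² = 0`, where `q = e^{iℏ₁}`, `p = e^{iℏ₂}`. -/
theorem superspace_from_Lie_superalgebra
    (A : Type*) [Ring A] [Algebra ℂ A] (ℏ₁ ℏ₂ : ℝ) (E ξ₁ ξ₂ : A)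
    (hE1 : E * ξ₁ = Complex.exp (Complex.I * ℏ₁) • (ξ₁ * E))
    (hE2 : E * ξ₂ = Complex.exp (Complex.I * ℏ₂) • (ξ₂ * E))
    (hanti : ξ₁ * ξ₂ + ξ₂ * ξ₁ = 0)
    (hsq1 : ξ₁ * ξ₁ = 0) (hsq2 : ξ₂ * ξ₂ = 0) :
    let q : ℂ := Complex.exp (Complex.I * ℏ₁)
    let p : ℂ := Complex.exp (Complex.I * ℏ₂)
    let X : A := E
    let Θ₁ : A := E * ξ₁
    let Θ₂ : A := E ^ 2 * ξ₂
    X * Θ₁ = q • (Θ₁ * X) ∧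
    X * Θ₂ = p • (Θ₂ * X) ∧
    Θ₁ * Θ₂ = (-(p * q⁻¹ ^ 2)) • (Θ₂ * Θ₁) ∧
    Θ₁ * Θ₁ = 0 ∧ Θ₂ * Θ₂ = 0 := by
  intro q p X Θ₁ Θ₂
  have hq : q ≠ 0 := exp_ne_zero _
  have hp : p ≠ 0 := exp_ne_zero _
  have hΘ₁ : Θ₁ = E ^ 1 * ξ₁ := by rw [pow_one]
  have h12 : q ^ 2 • (Θ₁ * Θ₂) = E ^ 3 * (ξ₁ * ξ₂) := by
    rw [hΘ₁, smul_pow_mul_mul_pow_mul hE1]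
  have h21 : p • (Θ₂ * Θ₁) = E ^ 3 * (ξ₂ * ξ₁) := by
    rw [hΘ₁, ← pow_one p, smul_pow_mul_mul_pow_mul hE2]
  have h11 : q • (Θ₁ * Θ₁) = E ^ 2 * (ξ₁ * ξ₁) := by
    rw [hΘ₁, ← pow_one q, smul_pow_mul_mul_pow_mul hE1]
  have h22 : p ^ 2 • (Θ₂ * Θ₂) = E ^ 4 * (ξ₂ * ξ₂) := smul_pow_mul_mul_pow_mul hE2 2 2 ξ₂
  refine ⟨?_, mul_pow_mul_eq_smul hE2 2, ?_, ?_, ?_⟩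
  · simpa only [pow_one] using mul_pow_mul_eq_smul hE1 1
  · rw [inv_pow, mul_comm, ← mul_neg, ← smul_smul, eq_inv_smul_iff₀ (pow_ne_zero 2 hq), h12,
      neg_smul, h21, eq_neg_of_add_eq_zero_left hanti, mul_neg]
  · rwa [hsq1, mul_zero, smul_eq_zero_iff_right hq] at h11
  · rwa [hsq2, mul_zero, smul_eq_zero_iff_right (pow_ne_zero 2 hp)] at h22
end

section
/- In the free superalgebra modulo the (h,h')-Manin relations of O(M_{h,h'}(1|2)), the left coaction δ_L(x_i) = Σ_k t_{ik} ⊗ x_k preserves the defining relation xθ₁ = θ₁x of O(A_h^{1|2}): if the matrix entries t_{ij} satisfy the relations (5.1) and supercommute appropriately with x, θ₁, θ₂ satisfying xθ₁ = θ₁x, xθ₂ = θ₂x + hx², θ₁θ₂ = -θ₂θ₁, θ₁² = 0, θ₂² = -hθ₂x, then the elements x' = ax + αθ₁ + βθ₂, θ₁' = γx + bθ₁ + cθ₂, θ₂' = δx + dθ₁ + eθ₂ again satisfy x'θ₁' = θ₁'x'. -/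
/-!
Moving every matrix entry to the left of the coordinates (with the sign fixed by the parities)
writes `x'θ₁' - θ₁'x'` in the ordered monomials `xθ₁`, `θ₁θ₂`, `xθ₂`, `x²`, with supercommutators
of matrix entries as coefficients. Those of `xθ₁` and `θ₁θ₂` vanish because `αγ = -γα`, `αc = cα`
and `b` is central. By the relations for `aγ`, `ac`, `βγ` and `βc`, those of `xθ₂` and `x²` are
multiples of `h` of elements `yβ + k βc`. Because `h` is a scalar and `2` is invertible, the odd
`β` satisfies `h βx² = 0` and `h βθ₂x = 0`: comparing `β(xθ₂)` with `(xθ₂)β`, and `βθ₂²` with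
`θ₂²β`, shows that each of them equals its negative. This kills the two remaining terms.
-/

theorem eq_zero_of_eq_neg (K : Type*) {M : Type*} [DivisionRing K] [NeZero (2 : K)]
    [AddCommGroup M] [Module K M] {y : M} (hy : y = -y) : y = 0 := by
  have h2 : (2 : K) • y = 0 := by
    rw [two_smul]
    nth_rewrite 1 [hy]
    exact neg_add_cancel y
  rw [← inv_smul_smul₀ (two_ne_zero : (2 : K) ≠ 0) y, h2, smul_zero]

section Ring
variable {A : Type*} [Ring A]

theorem mul_mul_mul_of_commute {s u : A} (hsu : s * u = u * s) (t v : A) :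
    t * u * (s * v) = t * s * (u * v) := by
  rw [mul_assoc, ← mul_assoc u, ← hsu, mul_assoc, mul_assoc]

theorem mul_mul_mul_of_anticommute {s u : A} (hsu : s * u = -(u * s)) (t v : A) :
    t * u * (s * v) = -(t * s * (u * v)) := by
  rw [mul_assoc, ← mul_assoc u, ← neg_neg (u * s), ← hsu]
  simp only [neg_mul, mul_neg, mul_assoc]

end Ring

section Algebra

variable {K A : Type*} [CommRing K] [Ring A] [Algebra K A]

theorem commutator_eq_ordered_monomials {h : K} {x θ₁ θ₂ a b c α β γ : A}
    (r1 : x * θ₁ = θ₁ * x) (r2 : x * θ₂ = θ₂ * x + h • (x ^ 2))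
    (r3 : θ₁ * θ₂ = -(θ₂ * θ₁)) (r4 : θ₁ ^ 2 = 0) (r5 : θ₂ ^ 2 = -(h • (θ₂ * x)))
    (ca1 : a * x = x * a) (ca2 : a * θ₁ = θ₁ * a) (ca3 : a * θ₂ = θ₂ * a)
    (cb1 : b * x = x * b) (cb2 : b * θ₁ = θ₁ * b) (cb3 : b * θ₂ = θ₂ * b)
    (cc1 : c * x = x * c) (cc2 : c * θ₁ = θ₁ * c) (cc3 : c * θ₂ = θ₂ * c)
    (cα1 : α * x = x * α) (cα2 : α * θ₁ = -(θ₁ * α)) (cα3 : α * θ₂ = -(θ₂ * α))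
    (cβ1 : β * x = x * β) (cβ2 : β * θ₁ = -(θ₁ * β)) (cβ3 : β * θ₂ = -(θ₂ * β))
    (cγ1 : γ * x = x * γ) (cγ2 : γ * θ₁ = -(θ₁ * γ)) (cγ3 : γ * θ₂ = -(θ₂ * γ)) :
    (a * x + α * θ₁ + β * θ₂) * (γ * x + b * θ₁ + c * θ₂) -
        (γ * x + b * θ₁ + c * θ₂) * (a * x + α * θ₁ + β * θ₂) =
      (a * b - b * a - (α * γ + γ * α)) * (x * θ₁) + (α * c - c * α - (β * b - b * β)) * (θ₁ * θ₂) +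
        (a * c - c * a - (β * γ + γ * β) - h • (β * c + c * β)) * (x * θ₂) +
        (a * γ - γ * a + h • (β * γ + c * a) + h ^ 2 • (β * c + c * β)) * x ^ 2 := by
  have hθ₂θ₁ : θ₂ * θ₁ = -(θ₁ * θ₂) := by rw [r3, neg_neg]
  have hθ₁θ₁ : θ₁ * θ₁ = 0 := by rw [← pow_two, r4]
  have hθ₂x : θ₂ * x = x * θ₂ - h • x ^ 2 := by rw [r2, add_sub_cancel_right]
  have hθ₂θ₂ : θ₂ * θ₂ = -(h • (x * θ₂)) + h ^ 2 • x ^ 2 := by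
    rw [← pow_two, r5, hθ₂x, smul_sub, smul_smul, pow_two h]; abel
  simp only [add_mul, mul_add, mul_mul_mul_of_commute cb1, mul_mul_mul_of_commute cb2,
    mul_mul_mul_of_commute cb3, mul_mul_mul_of_commute cc1, mul_mul_mul_of_commute cc2,
    mul_mul_mul_of_commute cc3, mul_mul_mul_of_commute ca1, mul_mul_mul_of_commute ca2,
    mul_mul_mul_of_commute ca3, mul_mul_mul_of_commute cα1, mul_mul_mul_of_anticommute cα2,
    mul_mul_mul_of_anticommute cα3, mul_mul_mul_of_commute cβ1, mul_mul_mul_of_anticommute cβ2,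
    mul_mul_mul_of_anticommute cβ3, mul_mul_mul_of_commute cγ1, mul_mul_mul_of_anticommute cγ2,
    mul_mul_mul_of_anticommute cγ3, ← r1, hθ₂θ₁, hθ₁θ₁, hθ₂x, hθ₂θ₂, ← pow_two]
  simp only [sub_mul, add_mul, mul_sub, mul_neg, mul_zero, smul_mul_assoc, mul_smul_comm]
  module

theorem coeff_x_theta2_eq {h h' : K} {a c β γ : A}
    (m4 : a * c = c * a - h • (c * β) - h' • (γ * a) + (h * h') • (γ * β))
    (m14 : β * γ = -(γ * β) + h • (c * β) - h' • (γ * a) - (h * h') • (c * a))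
    (m15 : β * c = (1 - h * h') • (c * β) - h' • (γ * β + c * a)) :
    a * c - c * a - (β * γ + γ * β) - h • (β * c + c * β) =
      -(h • (((2 + h * h') • c) * β + (2 : K) • (β * c))) := by
  rw [smul_mul_assoc]
  linear_combination (norm := module) m4 - m14 + h • m15

theorem coeff_x_sq_eq {h h' : K} {a c β γ : A}
    (m3 : a * γ = (1 + h * h') • (γ * a) + h • (γ * β - c * a))
    (m14 : β * γ = -(γ * β) + h • (c * β) - h' • (γ * a) - (h * h') • (c * a))
    (m15 : β * c = (1 - h * h') • (c * β) - h' • (γ * β + c * a)) :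
    a * γ - γ * a + h • (β * γ + c * a) + h ^ 2 • (β * c + c * β) =
      h ^ 2 • (((1 + h * h') • c + h' • γ) * β + (2 : K) • (β * c)) := by
  rw [add_mul, smul_mul_assoc, smul_mul_assoc]
  linear_combination (norm := module) m3 + h • m14 - h ^ 2 • m15

theorem smul_mul_eq_zero_of_commute {h : K} {β c m : A} (hβ : h • (β * m) = 0)
    (hc : c * m = m * c) (y : A) (k : K) : h • ((y * β + k • (β * c)) * m) = 0 := by
  rw [add_mul, smul_add, mul_assoc y, ← mul_smul_comm, hβ, mul_zero, zero_add, smul_mul_assoc,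
    mul_assoc, hc, ← mul_assoc, smul_comm, ← smul_mul_assoc, hβ, zero_mul, smul_zero]

end Algebra

section CharNeTwo

variable {K A : Type*} [Field K] [NeZero (2 : K)] [Ring A] [Algebra K A]

theorem smul_mul_sq_eq_zero_of_anticommute {h : K} {t x θ : A} (htx : t * x = x * t)
    (htθ : t * θ = -(θ * t)) (hxθ : x * θ = θ * x + h • x ^ 2) : h • (t * x ^ 2) = 0 := by
  have hθt : θ * t = -(t * θ) := by rw [htθ, neg_neg]
  apply eq_zero_of_eq_neg K
  calc h • (t * x ^ 2) = h • (x ^ 2 * t) := by rw [(Commute.pow_right htx 2).eq]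
    _ = x * θ * t - θ * x * t := by rw [hxθ, add_mul, smul_mul_assoc, add_sub_cancel_left]
    _ = -(t * (x * θ) - t * (θ * x)) := by
      rw [mul_assoc, hθt, mul_assoc, ← htx, ← mul_assoc, hθt]
      simp only [mul_neg, neg_mul, ← mul_assoc, htx]; abel
    _ = -(h • (t * x ^ 2)) := by rw [hxθ, mul_add, mul_smul_comm, add_sub_cancel_left]

theorem smul_mul_mul_eq_zero_of_anticommute {h : K} {t x θ : A} (htx : t * x = x * t)
    (htθ : t * θ = -(θ * t)) (hθ : θ ^ 2 = -(h • (θ * x))) : h • (t * (θ * x)) = 0 := by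
  have hθt : θ * t = -(t * θ) := by rw [htθ, neg_neg]
  apply eq_zero_of_eq_neg K
  calc h • (t * (θ * x)) = θ ^ 2 * t := by
        rw [hθ, neg_mul, smul_mul_assoc, mul_assoc θ, ← htx, ← mul_assoc θ, hθt, neg_mul, smul_neg,
          neg_neg, mul_assoc]
    _ = t * θ ^ 2 := by
      rw [pow_two, mul_assoc, hθt, mul_neg, ← mul_assoc, hθt, neg_mul, neg_neg, mul_assoc]
    _ = -(h • (t * (θ * x))) := by rw [hθ, mul_neg, mul_smul_comm]

end CharNeTwo

theorem coaction_preserves_x_theta1_general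
    (K : Type*) [Field K] [CharZero K] (A : Type*) [Ring A] [Algebra K A]
    (h h' : K) (x θ₁ θ₂ a b c d e α β γ δ : A)
    -- h-superspace relations
    (r1 : x * θ₁ = θ₁ * x) (r2 : x * θ₂ = θ₂ * x + h • (x ^ 2))
    (r3 : θ₁ * θ₂ = -(θ₂ * θ₁)) (r4 : θ₁ ^ 2 = 0) (r5 : θ₂ ^ 2 = -(h • (θ₂ * x)))
    -- even matrix entries commute with x, θ₁, θ₂
    (ca1 : a * x = x * a) (ca2 : a * θ₁ = θ₁ * a) (ca3 : a * θ₂ = θ₂ * a)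
    (cb1 : b * x = x * b) (cb2 : b * θ₁ = θ₁ * b) (cb3 : b * θ₂ = θ₂ * b)
    (cc1 : c * x = x * c) (cc2 : c * θ₁ = θ₁ * c) (cc3 : c * θ₂ = θ₂ * c)
    -- odd matrix entries commute with x and anticommute with θ₁, θ₂
    (cα1 : α * x = x * α) (cα2 : α * θ₁ = -(θ₁ * α)) (cα3 : α * θ₂ = -(θ₂ * α))
    (cβ1 : β * x = x * β) (cβ2 : β * θ₁ = -(θ₁ * β)) (cβ3 : β * θ₂ = -(θ₂ * β))
    (cγ1 : γ * x = x * γ) (cγ2 : γ * θ₁ = -(θ₁ * γ)) (cγ3 : γ * θ₂ = -(θ₂ * γ))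
    -- the relations (5.1)
    (m3 : a * γ = (1 + h * h') • (γ * a) + h • (γ * β - c * a))
    (m4 : a * c = c * a - h • (c * β) - h' • (γ * a) + (h * h') • (γ * β))
    (m9 : α * γ = -(γ * α))
    (m10 : α * c = c * α)
    (m14 : β * γ = -(γ * β) + h • (c * β) - h' • (γ * a) - (h * h') • (c * a))
    (m15 : β * c = (1 - h * h') • (c * β) - h' • (γ * β + c * a))
    (m33 : ∀ t ∈ ({a, c, d, e, α, β, γ, δ} : Set A), b * t = t * b) :
    (a * x + α * θ₁ + β * θ₂) * (γ * x + b * θ₁ + c * θ₂) =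
      (γ * x + b * θ₁ + c * θ₂) * (a * x + α * θ₁ + β * θ₂):= by
  have hβx2 : h • (β * x ^ 2) = 0 := smul_mul_sq_eq_zero_of_anticommute cβ1 cβ3 r2
  have hβxθ₂ : h • (β * (x * θ₂)) = 0 := by
    rw [r2, mul_add, smul_add, mul_smul_comm, hβx2, smul_zero, add_zero]
    exact smul_mul_mul_eq_zero_of_anticommute cβ1 cβ3 r5
  have hcx2 : c * x ^ 2 = x ^ 2 * c := (Commute.pow_right cc1 2).eq
  have hcxθ₂ : c * (x * θ₂) = x * θ₂ * c := (Commute.mul_right cc1 cc3).eq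
  rw [← sub_eq_zero, commutator_eq_ordered_monomials r1 r2 r3 r4 r5 ca1 ca2 ca3 cb1 cb2 cb3 cc1 cc2
    cc3 cα1 cα2 cα3 cβ1 cβ2 cβ3 cγ1 cγ2 cγ3, m33 a (by simp), m33 β (by simp), m9, m10,
    coeff_x_theta2_eq m4 m14 m15, coeff_x_sq_eq m3 m14 m15]
  rw [sub_self, sub_self, sub_self, neg_add_cancel, sub_zero, zero_mul, zero_mul, zero_add,
    zero_add, neg_mul, smul_mul_assoc h, smul_mul_assoc (h ^ 2), pow_two h, mul_smul,
    smul_mul_eq_zero_of_commute hβxθ₂ hcxθ₂, smul_mul_eq_zero_of_commute hβx2 hcx2, smul_zero,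
    neg_zero, add_zero]

/-- The left coaction of `O(M_{h,h'}(1|2))` preserves the relation `xθ₁ = θ₁x`:
if the entries of the quantum supermatrix satisfy the relations (5.1) and
supercommute with the coordinates of the `h`-superspace, then the transformed
coordinates `x' = ax + αθ₁ + βθ₂`, `θ₁' = γx + bθ₁ + cθ₂` satisfy `x'θ₁' = θ₁'x'`. -/
theorem coaction_preserves_x_theta1
    (K : Type*) [Field K] [CharZero K] (A : Type*) [Ring A] [Algebra K A]
    (h h' : K) (x θ₁ θ₂ a b c d e α β γ δ : A)
    -- h-superspace relations
    (r1 : x * θ₁ = θ₁ * x) (r2 : x * θ₂ = θ₂ * x + h • (x ^ 2))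
    (r3 : θ₁ * θ₂ = -(θ₂ * θ₁)) (r4 : θ₁ ^ 2 = 0) (r5 : θ₂ ^ 2 = -(h • (θ₂ * x)))
    -- even matrix entries commute with x, θ₁, θ₂
    (ca1 : a * x = x * a) (ca2 : a * θ₁ = θ₁ * a) (ca3 : a * θ₂ = θ₂ * a)
    (cb1 : b * x = x * b) (cb2 : b * θ₁ = θ₁ * b) (cb3 : b * θ₂ = θ₂ * b)
    (cc1 : c * x = x * c) (cc2 : c * θ₁ = θ₁ * c) (cc3 : c * θ₂ = θ₂ * c)
    (cd1 : d * x = x * d) (cd2 : d * θ₁ = θ₁ * d) (cd3 : d * θ₂ = θ₂ * d)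
    (ce1 : e * x = x * e) (ce2 : e * θ₁ = θ₁ * e) (ce3 : e * θ₂ = θ₂ * e)
    -- odd matrix entries commute with x and anticommute with θ₁, θ₂
    (cα1 : α * x = x * α) (cα2 : α * θ₁ = -(θ₁ * α)) (cα3 : α * θ₂ = -(θ₂ * α))
    (cβ1 : β * x = x * β) (cβ2 : β * θ₁ = -(θ₁ * β)) (cβ3 : β * θ₂ = -(θ₂ * β))
    (cγ1 : γ * x = x * γ) (cγ2 : γ * θ₁ = -(θ₁ * γ)) (cγ3 : γ * θ₂ = -(θ₂ * γ))
    (cδ1 : δ * x = x * δ) (cδ2 : δ * θ₁ = -(θ₁ * δ)) (cδ3 : δ * θ₂ = -(θ₂ * δ))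
    -- the relations (5.1)
    (m1 : a * α = (1 + h * h') • (α * a) - h' • (α * δ + d * a))
    (m2 : a * β = β * a + h' • (a ^ 2 - e * a - β * δ) - h • (β ^ 2))
    (m3 : a * γ = (1 + h * h') • (γ * a) + h • (γ * β - c * a))
    (m4 : a * c = c * a - h • (c * β) - h' • (γ * a) + (h * h') • (γ * β))
    (m5 : a * δ = δ * a + h • (a ^ 2 - e * a + δ * β) + h' • (δ ^ 2))
    (m6 : a * d = d * a + h • (α * a) + h' • (d * δ) - (h * h') • (α * δ))
    (m7 : a * e = e * a + h • (β * (a - e)) + h' • ((e - a) * δ))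
    (m8 : α * β = -((1 + h * h') • (β * α)) + h' • (β * d + e * α))
    (m9 : α * γ = -(γ * α))
    (m10 : α * c = c * α)
    (m11 : α * δ = -(δ * α) - h • (a * α) + h' • (δ * d) - (h * h') • (a * d))
    (m12 : α * d = d * α + h' • (d ^ 2))
    (m13 : α * e = e * α + h • (β * α) + h' • (e * d) - (h * h') • (d * β))
    (m14 : β * γ = -(γ * β) + h • (c * β) - h' • (γ * a) - (h * h') • (c * a))
    (m15 : β * c = (1 - h * h') • (c * β) - h' • (γ * β + c * a))
    (m16 : β * δ = -(δ * β) + (h • β + h' • δ) * (e - a))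
    (m17 : β * d = d * β + h • (α * β) + h' • (d * e) - (h * h') • (e * α))
    (m18 : β * e = e * β + h' • (e ^ 2 - e * a - δ * β) - h • (β ^ 2))
    (m19 : γ * c = c * γ + h • (c ^ 2))
    (m20 : γ * δ = -((1 + h * h') • (δ * γ)) + h • (e * γ + δ * c))
    (m21 : γ * d = d * γ)
    (m22 : γ * e = e * γ + h • (e * c) - h' • (δ * γ) - (h * h') • (c * δ))
    (m23 : c * δ = δ * c - h • (e * c) - h' • (δ * γ) - (h * h') • (γ * e))
    (m24 : c * d = d * c)
    (m25 : c * e = (1 - h * h') • (e * c) + h' • (e * γ - δ * c))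
    (m26 : δ * d = (1 - h * h') • (d * δ) + h • (α * δ - d * a))
    (m27 : δ * e = e * δ + h • (e ^ 2 - e * a + β * δ) + h' • (δ ^ 2))
    (m28 : d * e = (1 - h * h') • (e * d) + h • (β * d - e * α))
    (m29 : α ^ 2 = h' • (α * d))
    (m30 : β ^ 2 = h' • (β * (e - a)))
    (m31 : γ ^ 2 = h • (γ * c))
    (m32 : δ ^ 2 = h • (δ * (e - a)))
    (m33 : ∀ t ∈ ({a, c, d, e, α, β, γ, δ} : Set A), b * t = t * b)
    (m34 : a * (h • β + h' • δ) = (h • β + h' • δ) * a)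
    (m35 : e * (h • β + h' • δ) = (h • β + h' • δ) * e) :
    (a * x + α * θ₁ + β * θ₂) * (γ * x + b * θ₁ + c * θ₂) =
      (γ * x + b * θ₁ + c * θ₂) * (a * x + α * θ₁ + β * θ₂) :=
  coaction_preserves_x_theta1_general K A h h' x θ₁ θ₂ a b c d e α β γ δ r1 r2 r3 r4 r5 ca1 ca2 ca3
    cb1 cb2 cb3 cc1 cc2 cc3 cα1 cα2 cα3 cβ1 cβ2 cβ3 cγ1 cγ2 cγ3 m3 m4 m9 m10 m14 m15 m33
end
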